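/- arXiv:1707.06288 — 4 statements merged into one kernel-verified Lean document; each statement's English description precedes it below -/
import Mathlib

section
/- Fix a field K, ε > 0, and α ∈ ℝ, and let M, N : (ℝ, ≤) → Vect_K be persistence modules. Let I_{α,ε} be the category given by the preorder ≤_{α,ε} on ℝ ⊔ ℝ generated (as a reflexive-transitive closure) by: (a,i) ≤ (b,i) whenever a ≤ b, together with the relations (α+2nε, 1) ≤ (α+(2n+1)ε, 0) and (α+(2n+1)ε, 0) ≤ (α+(2n+2)ε, 1) for all n ∈ ℤ. Let I_{3ε} be the category of the preorder on ℝ ⊔ ℝ with (a,i) ≤ (b,i) iff a ≤ b and (a,i) ≤ (b,j) for i ≠ j iff 3ε ≤ b − a. If M and N are I_{α,ε}-interleaved (weak ε-interleaved), then M and N are I_{3ε}-interleaved. -/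
open CategoryTheory

/-- Data for a preorder on `ℝ ⊔ ℝ` (encoded as `ℝ × Bool`) whose restriction to
each copy of `ℝ` is the usual order and whose cross-copy relation is `rel`. -/
structure CrossData where
  rel : ℝ → ℝ → Prop
  left_le : ∀ a b x : ℝ, a ≤ b → rel b x → rel a x
  le_right : ∀ a b x : ℝ, rel a b → b ≤ x → rel a x
  rel_rel : ∀ a b x : ℝ, rel a b → rel b x → a ≤ x

/-- The disjoint union `ℝ ⊔ ℝ`, encoded as `ℝ × Bool`, carrying the preorder
determined by `D`. -/
def Cross (_D : CrossData) : Type := ℝ × Bool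

/-- The order: within a copy, the usual order; across copies, `D.rel`. -/
def crossLE (D : CrossData) (x y : ℝ × Bool) : Prop :=
  if x.2 = y.2 then x.1 ≤ y.1 else D.rel x.1 y.1

instance (D : CrossData) : Preorder (Cross D) where
  le x y := crossLE D x y
  le_refl x := by simp [crossLE]
  le_trans x y z hxy hyz := by
    obtain ⟨a, i⟩ := x; obtain ⟨b, j⟩ := y; obtain ⟨c, k⟩ := z
    unfold crossLE at *
    dsimp only at *
    by_cases h1 : i = j <;> by_cases h2 : j = k
    · rw [if_pos h1] at hxy
      rw [if_pos h2] at hyz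
      rw [if_pos (h1.trans h2)]
      exact le_trans hxy hyz
    · rw [if_pos h1] at hxy
      rw [if_neg h2] at hyz
      rw [if_neg (h1 ▸ h2)]
      exact D.left_le _ _ _ hxy hyz
    · rw [if_neg h1] at hxy
      rw [if_pos h2] at hyz
      rw [if_neg (fun h : i = k => h1 (h.trans h2.symm))]
      exact D.le_right _ _ _ hxy hyz
    · rw [if_neg h1] at hxy
      rw [if_neg h2] at hyz
      have hik : i = k := by
        cases i <;> cases j <;> cases k <;> simp_all
      rw [if_pos hik]
      exact D.rel_rel _ _ _ hxy hyz

/-- The inclusion of the `i`-th copy of `ℝ` into `Cross D`. -/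
def inclCross (D : CrossData) (i : Bool) : ℝ ⥤ Cross D :=
  Monotone.functor (f := fun a => ((a, i) : Cross D))
    (fun {a b} h => show crossLE D (a, i) (b, i) by simp [crossLE, h])

/-- Persistence modules `M, N : (ℝ,≤) ⥤ Vect_K` are interleaved over the
preorder category `Cross D` if there is a functor `H : Cross D ⥤ Vect_K`
restricting to `M` on the first copy of `ℝ` and to `N` on the second. -/
def Interleaved (K : Type) [Field K] (D : CrossData) (M N : ℝ ⥤ ModuleCat K) : Prop :=
  ∃ H : Cross D ⥤ ModuleCat K, inclCross D false ⋙ H = M ∧ inclCross D true ⋙ H = N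

/-- The cross relation `δ ≤ b - a` of the category `I_δ`, for `δ ≥ 0`. -/
def geData (δ : ℝ) (hδ : 0 ≤ δ) : CrossData where
  rel a b := δ ≤ b - a
  left_le a b x hab h := by linarith
  le_right a b x h hbx := by linarith
  rel_rel a b x h1 h2 := by linarith

/-- The generating relations of the preorder `≤_{α,ε}` on `ℝ ⊔ ℝ`: within each
copy the usual order, plus `(α+2nε, 1) ≤ (α+(2n+1)ε, 0)` and
`(α+(2n+1)ε, 0) ≤ (α+(2n+2)ε, 1)` for all `n ∈ ℤ`. Copy `0` is encoded by
`false` and copy `1` by `true`. -/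
def weakBase (α ε : ℝ) : ℝ × Bool → ℝ × Bool → Prop := fun x y =>
  (x.2 = y.2 ∧ x.1 ≤ y.1) ∨
  (∃ n : ℤ, x = (α + 2 * (n : ℝ) * ε, true) ∧ y = (α + (2 * (n : ℝ) + 1) * ε, false)) ∨
  (∃ n : ℤ, x = (α + (2 * (n : ℝ) + 1) * ε, false) ∧ y = (α + (2 * (n : ℝ) + 2) * ε, true))

/-- `ℝ ⊔ ℝ` with the preorder generated (as a reflexive-transitive closure) by
the relations `weakBase α ε`; this is the category `I_{α,ε}`. -/
def WeakCross (_α _ε : ℝ) : Type := ℝ × Bool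

instance (α ε : ℝ) : Preorder (WeakCross α ε) where
  le := Relation.ReflTransGen (weakBase α ε)
  le_refl _ := Relation.ReflTransGen.refl
  le_trans _ _ _ := Relation.ReflTransGen.trans

/-- The inclusion of the `i`-th copy of `ℝ` into `WeakCross α ε`. -/
def inclWeak (α ε : ℝ) (i : Bool) : ℝ ⥤ WeakCross α ε :=
  Monotone.functor (f := fun a => ((a, i) : WeakCross α ε))
    (fun {a b} h => Relation.ReflTransGen.single (Or.inl ⟨rfl, h⟩))


lemma weak_step_of_cross (ε : ℝ) (hε : 0 < ε) (α : ℝ) :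
    ∀ x y : ℝ × Bool, crossLE (geData (3 * ε) (by linarith)) x y →
      Relation.ReflTransGen (weakBase α ε) x y := by
  rintro ⟨a, i⟩ ⟨b, j⟩ hxy
  unfold crossLE at hxy
  dsimp only at hxy
  by_cases hij : i = j
  · rw [if_pos hij] at hxy
    subst hij
    exact Relation.ReflTransGen.single (Or.inl ⟨rfl, hxy⟩)
  · rw [if_neg hij] at hxy
    have hab : 3 * ε ≤ b - a := hxy
    have h2ε : (0:ℝ) < 2 * ε := by linarith
    cases i with
    | true =>
      have hj : j = false := by cases j <;> simp_all
      subst hj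
      set n : ℤ := ⌈(a - α) / (2 * ε)⌉ with hn
      have h1 : (a - α) / (2 * ε) ≤ (n : ℝ) := Int.le_ceil _
      have h2 : (n : ℝ) < (a - α) / (2 * ε) + 1 := Int.ceil_lt_add_one _
      rw [div_le_iff₀ h2ε] at h1
      have h2' : ((n : ℝ) - 1) * (2 * ε) < a - α :=
        (lt_div_iff₀ h2ε).mp (by linarith)
      have ha : a ≤ α + 2 * (n : ℝ) * ε := by nlinarith
      have hb : α + (2 * (n : ℝ) + 1) * ε ≤ b := by nlinarith
      have s1 : Relation.ReflTransGen (weakBase α ε) (a, true) (α + 2 * (n : ℝ) * ε, true) :=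
        Relation.ReflTransGen.single (Or.inl ⟨rfl, ha⟩)
      have s2 : Relation.ReflTransGen (weakBase α ε) (α + 2 * (n : ℝ) * ε, true)
          (α + (2 * (n : ℝ) + 1) * ε, false) :=
        Relation.ReflTransGen.single (Or.inr (Or.inl ⟨n, rfl, rfl⟩))
      have s3 : Relation.ReflTransGen (weakBase α ε) (α + (2 * (n : ℝ) + 1) * ε, false)
          (b, false) := Relation.ReflTransGen.single (Or.inl ⟨rfl, hb⟩)
      exact (s1.trans s2).trans s3
    | false =>
      have hj : j = true := by cases j <;> simp_all
      subst hj
      set n : ℤ := ⌈(a - α - ε) / (2 * ε)⌉ with hn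
      have h1 : (a - α - ε) / (2 * ε) ≤ (n : ℝ) := Int.le_ceil _
      have h2 : (n : ℝ) < (a - α - ε) / (2 * ε) + 1 := Int.ceil_lt_add_one _
      rw [div_le_iff₀ h2ε] at h1
      have h2' : ((n : ℝ) - 1) * (2 * ε) < a - α - ε :=
        (lt_div_iff₀ h2ε).mp (by linarith)
      have ha : a ≤ α + (2 * (n : ℝ) + 1) * ε := by nlinarith
      have hb : α + (2 * (n : ℝ) + 2) * ε ≤ b := by nlinarith
      have s1 : Relation.ReflTransGen (weakBase α ε) (a, false)
          (α + (2 * (n : ℝ) + 1) * ε, false) :=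
        Relation.ReflTransGen.single (Or.inl ⟨rfl, ha⟩)
      have s2 : Relation.ReflTransGen (weakBase α ε) (α + (2 * (n : ℝ) + 1) * ε, false)
          (α + (2 * (n : ℝ) + 2) * ε, true) :=
        Relation.ReflTransGen.single (Or.inr (Or.inr ⟨n, rfl, rfl⟩))
      have s3 : Relation.ReflTransGen (weakBase α ε) (α + (2 * (n : ℝ) + 2) * ε, true)
          (b, true) := Relation.ReflTransGen.single (Or.inl ⟨rfl, hb⟩)
      exact (s1.trans s2).trans s3

/-- If `M` and `N` are `I_{α,ε}`-interleaved (weak `ε`-interleaved), then they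
are `I_{3ε}`-interleaved. -/
theorem interleaved_of_weak_interleaved (K : Type) [Field K] (ε : ℝ) (hε : 0 < ε) (α : ℝ)
    (M N : ℝ ⥤ ModuleCat K)
    (h : ∃ H : WeakCross α ε ⥤ ModuleCat K,
        inclWeak α ε false ⋙ H = M ∧ inclWeak α ε true ⋙ H = N) :
    Interleaved K (geData (3 * ε) (by linarith)) M N := by
  obtain ⟨H, hM, hN⟩ := h
  let G : Cross (geData (3 * ε) (by linarith)) ⥤ WeakCross α ε :=
    Monotone.functor (f := fun x : Cross (geData (3 * ε) (by linarith)) =>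
        (x : WeakCross α ε))
      (fun {x y} hxy => weak_step_of_cross ε hε α x y hxy)
  have hGf : ∀ i : Bool, inclCross (geData (3 * ε) (by linarith)) i ⋙ G = inclWeak α ε i := by
    intro i
    apply CategoryTheory.Functor.ext (fun _ => rfl)
  refine ⟨G ⋙ H, ?_, ?_⟩
  · calc inclCross _ false ⋙ (G ⋙ H) = (inclCross _ false ⋙ G) ⋙ H := rfl
      _ = inclWeak α ε false ⋙ H := by rw [hGf]
      _ = M := hM
  · calc inclCross _ true ⋙ (G ⋙ H) = (inclCross _ true ⋙ G) ⋙ H := rfl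
      _ = inclWeak α ε true ⋙ H := by rw [hGf]
      _ = N := hN
end

section
/- Let P, Q, R be categories, and let (Γ, K, η, ν) be a future equivalence between P and Q and (Λ, M, σ, τ) a future equivalence between Q and R. Define Γ' = Λ ∘ Γ : P → R, K' = K ∘ M : R → P, and natural transformations η' : Id_P ⇒ K'Γ' with components η'_p = K(σ_{Γ(p)}) ∘ η_p, and ν' : Id_R ⇒ Γ'K' with components ν'_r = Λ(ν_{M(r)}) ∘ τ_r. Then (Γ', K', η', ν') is a future equivalence between P and R; in particular η' and ν' are natural transformations and they satisfy the coherence conditions Γ'η' = ν'Γ' and K'ν' = η'K'. -/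
open CategoryTheory

/-- Composition of future equivalences. Given a future equivalence
`(Γ, K, η, ν)` between `P` and `Q` and a future equivalence `(Λ, M, σ, τ)`
between `Q` and `R`, the data `Γ' = Λ ∘ Γ`, `K' = K ∘ M`,
`η'_p = K(σ_{Γ(p)}) ∘ η_p`, `ν'_r = Λ(ν_{M(r)}) ∘ τ_r` form a future
equivalence between `P` and `R`: `η'` and `ν'` are natural transformations
(with the stated components) satisfying the coherence conditions
`Γ'η' = ν'Γ'` and `K'ν' = η'K'`. -/
theorem futureEquiv_comp {P Q R : Type*} [Category P] [Category Q] [Category R]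
    (Γ : P ⥤ Q) (K : Q ⥤ P) (Λ : Q ⥤ R) (M : R ⥤ Q)
    (η : 𝟭 P ⟶ Γ ⋙ K) (ν : 𝟭 Q ⟶ K ⋙ Γ)
    (σ : 𝟭 Q ⟶ Λ ⋙ M) (τ : 𝟭 R ⟶ M ⋙ Λ)
    (hΓη : ∀ p : P, Γ.map (η.app p) = ν.app (Γ.obj p))
    (hKν : ∀ q : Q, K.map (ν.app q) = η.app (K.obj q))
    (hΛσ : ∀ q : Q, Λ.map (σ.app q) = τ.app (Λ.obj q))
    (hMτ : ∀ r : R, M.map (τ.app r) = σ.app (M.obj r)) :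
    ∃ (η' : 𝟭 P ⟶ (Γ ⋙ Λ) ⋙ (M ⋙ K)) (ν' : 𝟭 R ⟶ (M ⋙ K) ⋙ (Γ ⋙ Λ)),
      (∀ p : P, η'.app p = η.app p ≫ K.map (σ.app (Γ.obj p))) ∧
      (∀ r : R, ν'.app r = τ.app r ≫ Λ.map (ν.app (M.obj r))) ∧
      (∀ p : P, (Γ ⋙ Λ).map (η'.app p) = ν'.app ((Γ ⋙ Λ).obj p)) ∧
      (∀ r : R, (M ⋙ K).map (ν'.app r) = η'.app ((M ⋙ K).obj r)) := by
  refine ⟨⟨fun p => η.app p ≫ K.map (σ.app (Γ.obj p)), ?_⟩,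
    ⟨fun r => τ.app r ≫ Λ.map (ν.app (M.obj r)), ?_⟩,
    fun p => rfl, fun r => rfl, ?_, ?_⟩
  · intro p p' f
    have h1 := η.naturality f
    simp only [Functor.id_map, Functor.comp_map] at h1
    simp only [Functor.id_map, Functor.comp_obj, Functor.comp_map, Category.assoc]
    rw [← Category.assoc, h1, Category.assoc, ← K.map_comp, ← K.map_comp]
    have h2 := σ.naturality (Γ.map f)
    simp only [Functor.id_map, Functor.comp_map] at h2
    rw [h2]
  · intro r r' f
    have h1 := τ.naturality f
    simp only [Functor.id_map, Functor.comp_map] at h1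
    simp only [Functor.id_map, Functor.comp_obj, Functor.comp_map, Category.assoc]
    rw [← Category.assoc, h1, Category.assoc, ← Λ.map_comp, ← Λ.map_comp]
    have h2 := ν.naturality (M.map f)
    simp only [Functor.id_map, Functor.comp_map] at h2
    rw [h2]
  · intro p
    have h := ν.naturality (σ.app (Γ.obj p))
    simp only [Functor.id_obj, Functor.id_map, Functor.comp_obj, Functor.comp_map] at h
    simp only [Functor.comp_obj, Functor.comp_map, Functor.map_comp, hΓη]
    rw [← Λ.map_comp, ← h, Λ.map_comp, hΛσ]
  · intro r
    have h := σ.naturality (ν.app (M.obj r))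
    simp only [Functor.id_obj, Functor.id_map, Functor.comp_obj, Functor.comp_map] at h
    simp only [Functor.comp_obj, Functor.comp_map, Functor.map_comp, hMτ]
    rw [← K.map_comp, ← h, K.map_comp, hKν]
end

section
/- Let N be the category with a single object x whose morphisms are φ^k for k ≥ 0, with composition φ^i ∘ φ^j = φ^{i+j} (i.e. the one-object category of the monoid (ℕ, +, 0)). Then every future equivalence (Γ, K, η, ν) from N to itself is of the form (Id_N, Id_N, φ^ℓ, φ^ℓ) for some ℓ ≥ 0; that is, Γ(φ^k) = φ^k and K(φ^k) = φ^k for all k ≥ 0, and there exists ℓ ≥ 0 with η_x = φ^ℓ = ν_x. -/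
open CategoryTheory

/-- The one-object category of the additive monoid `(ℕ, +, 0)`: a single
object `x` with morphisms `φ^k` for `k ≥ 0` (a morphism is its exponent
`k : ℕ`), composing by addition of exponents. -/
def NCat : Type := Unit

instance : CategoryStruct NCat where
  Hom _ _ := ℕ
  id _ := Nat.zero
  comp f g := Nat.add f g

instance : Category NCat where
  id_comp f := Nat.zero_add f
  comp_id f := Nat.add_zero f
  assoc f g h := Nat.add_assoc f g h

/-!
Naturality of `η` at `φ^k` says `k + η_x = η_x + KΓ(k)`, so cancellation in `ℕ` makes `KΓ` the
identity. A functor `N ⥤ N` multiplies exponents by the exponent `n` of its image of `φ`, so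
`KΓ = Id` gives `n_Γ * n_K = 1`, whence `n_Γ = n_K = 1`. The coherence `Γη = νΓ` then reads
`ν_x = Γ(η_x) = η_x`.
-/

namespace NCat

instance : Subsingleton NCat := inferInstanceAs (Subsingleton Unit)

def hom (X Y : NCat) (k : ℕ) : X ⟶ Y := k

lemma map_hom (F : NCat ⥤ NCat) (X : NCat) (k : ℕ) :
    F.map (hom X X k) = hom _ _ (k * F.map (hom X X 1)) := by
  induction k with
  | zero => exact (F.map_id X).trans (congrArg (hom _ _) (Nat.zero_mul _).symm)
  | succ k ih =>
    calc F.map (hom X X (k + 1)) = F.map (hom X X k ≫ hom X X 1) := rfl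
      _ = hom _ _ ((k + 1) * F.map (hom X X 1)) := by
        rw [F.map_comp, ih]
        exact (Nat.succ_mul k _).symm

lemma map_eq_self_of_map_hom_one {F : NCat ⥤ NCat} {X : NCat}
    (h : F.map (hom X X 1) = hom _ _ 1) {Y Z : NCat} (k : Y ⟶ Z) : F.map k = k := by
  obtain rfl := Subsingleton.elim X Y
  obtain rfl := Subsingleton.elim X Z
  rw [show k = hom X X k from rfl, map_hom, h]
  exact congrArg (hom _ _) (Nat.mul_one k)

lemma map_eq_self_of_natTrans {F : NCat ⥤ NCat} (α : 𝟭 NCat ⟶ F) {X Y : NCat} (k : X ⟶ Y) :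
    F.map k = k := by
  obtain rfl := Subsingleton.elim X Y
  exact Nat.add_left_cancel ((α.naturality k).symm.trans (Nat.add_comm _ _))

lemma map_hom_one_of_comp {F G : NCat ⥤ NCat}
    (h : ∀ {X Y : NCat} (k : X ⟶ Y), (F ⋙ G).map k = k) (X : NCat) :
    F.map (hom X X 1) = hom _ _ 1 ∧ G.map (hom X X 1) = hom _ _ 1 := by
  have hGF : G.map (hom _ _ (F.map (hom X X 1))) = hom _ _ 1 := h (hom X X 1)
  rw [map_hom] at hGF
  exact (mul_eq_one (α := ℕ)).mp hGF

end NCat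

theorem futureEquiv_NCat_general (Γ K : NCat ⥤ NCat)
    (η : 𝟭 NCat ⟶ Γ ⋙ K) (ν : 𝟭 NCat ⟶ K ⋙ Γ)
    (hcoh1 : ∀ X : NCat, Γ.map (η.app X) = ν.app (Γ.obj X)) :
    (∀ (X Y : NCat) (k : X ⟶ Y), Γ.map k = k ∧ K.map k = k) ∧
    ∃ ℓ : ℕ, ∀ X : NCat, η.app X = ℓ ∧ ν.app X = ℓ := by
  let x : NCat := ()
  obtain ⟨hΓ, hK⟩ := NCat.map_hom_one_of_comp (NCat.map_eq_self_of_natTrans η) x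
  have hΓ_id {X Y : NCat} (k : X ⟶ Y) : Γ.map k = k := NCat.map_eq_self_of_map_hom_one hΓ k
  refine ⟨fun X Y k => ⟨hΓ_id k, NCat.map_eq_self_of_map_hom_one hK k⟩, η.app x, fun X => ?_⟩
  obtain rfl := Subsingleton.elim x X
  exact ⟨rfl, (hcoh1 x).symm.trans (hΓ_id _)⟩

/-- Every future equivalence `(Γ, K, η, ν)` from `N` to itself is of the form
`(Id_N, Id_N, φ^ℓ, φ^ℓ)` for some `ℓ ≥ 0`: `Γ` and `K` are the identity on
morphisms (`Γ(φ^k) = φ^k = K(φ^k)`), and there exists `ℓ` with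
`η_x = φ^ℓ = ν_x`. -/
theorem futureEquiv_NCat (Γ K : NCat ⥤ NCat)
    (η : 𝟭 NCat ⟶ Γ ⋙ K) (ν : 𝟭 NCat ⟶ K ⋙ Γ)
    (hcoh1 : ∀ X : NCat, Γ.map (η.app X) = ν.app (Γ.obj X))
    (hcoh2 : ∀ X : NCat, K.map (ν.app X) = η.app (K.obj X)) :
    (∀ (X Y : NCat) (k : X ⟶ Y), Γ.map k = k ∧ K.map k = k) ∧
    ∃ ℓ : ℕ, ∀ X : NCat, η.app X = ℓ ∧ ν.app X = ℓ :=
  futureEquiv_NCat_general Γ K η ν hcoh1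
end

section
/- Let (M, d) be a metric space and A, B ⊆ M. For r ∈ [0,∞] let A^r = { m ∈ M | inf_{a∈A} d(a,m) ≤ r } denote the r-offset, and consider the families of offsets F_A(a) = A^a and F_B(a) = B^a for a ∈ [0,∞]. Define the interleaving distance d(F_A, F_B) = inf { r ∈ [0,∞] | for all a ∈ [0,∞], A^a ⊆ B^{a+r} and B^a ⊆ A^{a+r} }. Then the Hausdorff distance of A and B equals the interleaving distance of their offset families: d_H(A,B) = d(F_A, F_B), where d_H(A,B) = max( sup_{a∈A} inf_{b∈B} d(a,b), sup_{b∈B} inf_{a∈A} d(a,b) ). -/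
open ENNReal

/-- The `r`-offset of a subset `A` of a metric space:
`A^r = { m | inf_{a ∈ A} d(a,m) ≤ r }`, distances valued in `[0,∞]`. -/
def offset {M : Type*} [MetricSpace M] (A : Set M) (r : ℝ≥0∞) : Set M :=
  {m : M | ⨅ a ∈ A, edist a m ≤ r}

/-- The Hausdorff distance
`d_H(A,B) = max( sup_{a∈A} inf_{b∈B} d(a,b), sup_{b∈B} inf_{a∈A} d(a,b) )`. -/
noncomputable def hausdorffDist {M : Type*} [MetricSpace M] (A B : Set M) : ℝ≥0∞ :=
  max (⨆ a ∈ A, ⨅ b ∈ B, edist a b) (⨆ b ∈ B, ⨅ a ∈ A, edist a b)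

/-- The interleaving distance of the offset families `F_A(a) = A^a` and
`F_B(a) = B^a`: the infimum of the `r` such that for all `a`,
`A^a ⊆ B^{a+r}` and `B^a ⊆ A^{a+r}`. -/
noncomputable def interleavingDistOffsets {M : Type*} [MetricSpace M] (A B : Set M) : ℝ≥0∞ :=
  sInf {r : ℝ≥0∞ | ∀ a : ℝ≥0∞, offset A a ⊆ offset B (a + r) ∧ offset B a ⊆ offset A (a + r)}

/-!
`d_H` is Mathlib's `Metric.hausdorffEDist`, and the offset `A^r` is the sublevel set
`{m | infEDist m A ≤ r}`. So `A^a ⊆ B^(a + d_H(A,B))` is the triangle inequality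
`infEDist m B ≤ infEDist m A + d_H(A,B)`; conversely, taking `a = 0` in an `r`-interleaving puts
every point of `A` within `r` of `B` and vice versa, which bounds `d_H(A,B)` by `r`.
-/

open Metric (infEDist hausdorffEDist)

section Offset

variable {M : Type*} [MetricSpace M] {A B : Set M} {r : ℝ≥0∞} {m : M}

theorem mem_offset_iff_infEDist_le : m ∈ offset A r ↔ infEDist m A ≤ r := by
  simp only [offset, Set.mem_ofPred_eq, infEDist, edist_comm]

theorem self_subset_offset : A ⊆ offset A r := fun _ ha =>
  mem_offset_iff_infEDist_le.2 <| (Metric.infEDist_zero_of_mem ha).trans_le zero_le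

theorem offset_subset_offset_add_hausdorffEDist (s : ℝ≥0∞) :
    offset A s ⊆ offset B (s + hausdorffEDist A B) := fun m hm => by
  rw [mem_offset_iff_infEDist_le] at hm ⊢
  exact Metric.infEDist_le_infEDist_add_hausdorffEDist.trans (add_le_add_left hm _)

theorem infEDist_le_of_offset_zero_subset (h : offset A 0 ⊆ offset B r) {a : M} (ha : a ∈ A) :
    infEDist a B ≤ r := by
  simpa only [mem_offset_iff_infEDist_le] using h (self_subset_offset ha)

end Offset

theorem hausdorffDist_eq_hausdorffEDist {M : Type*} [MetricSpace M] (A B : Set M) :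
    hausdorffDist A B = hausdorffEDist A B := by
  simp only [hausdorffDist, Metric.hausdorffEDist_def, infEDist, edist_comm]

/-- The Hausdorff distance of `A` and `B` equals the interleaving distance of
their offset families. -/
theorem hausdorffDist_eq_interleavingDist {M : Type*} [MetricSpace M] (A B : Set M) :
    hausdorffDist A B = interleavingDistOffsets A B := by
  rw [hausdorffDist_eq_hausdorffEDist]
  refine le_antisymm (le_sInf fun r hr => ?_) (sInf_le fun s => ⟨?_, ?_⟩)
  · exact Metric.hausdorffEDist_le_of_infEDist
      (fun _ => infEDist_le_of_offset_zero_subset (by simpa only [zero_add] using (hr 0).1))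
      (fun _ => infEDist_le_of_offset_zero_subset (by simpa only [zero_add] using (hr 0).2))
  · exact offset_subset_offset_add_hausdorffEDist s
  · rw [Metric.hausdorffEDist_comm]
    exact offset_subset_offset_add_hausdorffEDist s
end
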